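/- arXiv:1209.2408 — 3 statements merged into one kernel-verified Lean document; each statement's English description precedes it below -/
import Mathlib

section
/- Rank extractor (Gabizon–Raz type): let 1 ≤ s ≤ r ≤ n and let M be an n × r' matrix over a field F of rank s, with r' ≥ s. Let K be a field extension of F and ω ∈ K an element of multiplicative order ≥ n. For α ∈ K define the r × n matrix A_α by (A_α)_{i,j} = (ω^i α)^j. Then the number of α ∈ K for which the first s rows of A_α M have rank < s is at most nr − r(r+1)/2 < nr. -/
/-!
Pick `N` so that the columns of `M * N`, read as coefficient vectors, are polynomials
`p₀, …, p_{s-1}` of pairwise distinct degrees `dⱼ < n` (the degrees occurring in the column space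
are at least as many as its dimension). If `B_α` is the first `s` rows of `A_α M`, the `(i, j)`
entry of `B_α N` is `pⱼ(ωⁱ α)`, so `rank B_α < s` makes `α` a root of `P(X) = det (pⱼ(ωⁱ X))`.
The coefficient of `X ^ ∑ dⱼ` in `P` is `∏ lc(pⱼ)` times the Vandermonde determinant of the
distinct `ω ^ dⱼ`, hence `P ≠ 0`, and `deg P ≤ ∑ dⱼ ≤ ∑_{i<s} (n - 1 - i) ≤ n r - r (r + 1) / 2`.
-/

open Polynomial Function Finset Matrix

theorem Finset.sum_le_sum_range_sub_of_lt {n : ℕ} (T : Finset ℕ) (hT : ∀ t ∈ T, t < n) :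
    ∑ t ∈ T, t ≤ ∑ i ∈ range #T, (n - 1 - i) := by
  induction T using Finset.induction_on_min with
  | empty => simp
  | insert a T haT ih =>
    have haT' : a ∉ T := fun h => lt_irrefl a (haT a h)
    have ha := hT a (mem_insert_self a T)
    have hcard : #T ≤ n - 1 - a :=
      calc #T ≤ #(Ioo a n) :=
            card_le_card fun t ht => mem_Ioo.mpr ⟨haT t ht, hT t (mem_insert_of_mem ht)⟩
        _ = n - 1 - a := by simp; omega
    rw [sum_insert haT', card_insert_of_notMem haT', sum_range_succ]
    have := ih fun t ht => hT t (mem_insert_of_mem ht)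
    omega

theorem Finset.sum_range_sub_one_sub {n r : ℕ} (hr : r ≤ n) :
    ∑ i ∈ range r, (n - 1 - i) = n * r - r * (r + 1) / 2 := by
  suffices ∑ i ∈ range r, (n - 1 - i) + r * (r + 1) / 2 = n * r by omega
  induction r with
  | zero => simp
  | succ r ih =>
    have htri : (r + 1) * (r + 1 + 1) / 2 = r * (r + 1) / 2 + (r + 1) := by
      rw [show (r + 1) * (r + 1 + 1) = r * (r + 1) + (r + 1) * 2 by ring,
        Nat.add_mul_div_right _ _ two_pos]
    rw [sum_range_succ, htri, mul_add_one n r, ← ih (by omega)]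
    omega

theorem Finset.sum_le_mul_sub_of_injective {s r n : ℕ} (hsr : s ≤ r) (hrn : r ≤ n)
    {d : Fin s → ℕ} (hd : Injective d) (hlt : ∀ j, d j < n) :
    ∑ j, d j ≤ n * r - r * (r + 1) / 2 := by
  classical
  have himage := (univ.image d).sum_le_sum_range_sub_of_lt (n := n) (by simpa using hlt)
  rw [sum_image hd.injOn, card_image_of_injective _ hd, card_univ, Fintype.card_fin] at himage
  calc ∑ j, d j ≤ ∑ i ∈ range s, (n - 1 - i) := himage
    _ ≤ ∑ i ∈ range r, (n - 1 - i) := sum_le_sum_of_subset (range_subset_range.mpr hsr)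
    _ = n * r - r * (r + 1) / 2 := sum_range_sub_one_sub hrn

namespace Polynomial

theorem coeff_prod_sum_of_natDegree_le {R ι : Type*} [CommSemiring R] (t : Finset ι)
    (f : ι → R[X]) (e : ι → ℕ) (h : ∀ i ∈ t, (f i).natDegree ≤ e i) :
    (∏ i ∈ t, f i).coeff (∑ i ∈ t, e i) = ∏ i ∈ t, (f i).coeff (e i) := by
  classical
  induction t using Finset.cons_induction with
  | empty => simp
  | cons a t ha ih =>
    have ht : ∀ i ∈ t, (f i).natDegree ≤ e i := fun i hi => h i (mem_cons_of_mem hi)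
    rw [prod_cons, sum_cons, prod_cons, coeff_mul_add_eq_of_natDegree_le (h a (mem_cons_self a t))
      ((natDegree_prod_le t f).trans (sum_le_sum ht)), ih ht]

theorem natDegree_comp_C_mul_X_le {R : Type*} [CommSemiring R] (p : R[X]) (a : R) :
    (p.comp (C a * X)).natDegree ≤ p.natDegree :=
  natDegree_comp_le.trans
    (mul_le_of_le_one_right (Nat.zero_le _) ((natDegree_C_mul_le a X).trans natDegree_X_le))

theorem eval₂_ofFn {R S : Type*} [Semiring R] [DecidableEq R] [CommSemiring S] (f : R →+* S)
    (x : S) {n : ℕ} (v : Fin n → R) : (ofFn n v).eval₂ f x = ∑ k, f (v k) * x ^ (k : ℕ) := by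
  simp [ofFn_eq_sum_monomial, eval₂_finsetSum]

section Det

variable {R ι : Type*} [CommRing R] [Fintype ι] [DecidableEq ι]

theorem natDegree_det_le_of_natDegree_le {Q : Matrix ι ι R[X]} {e : ι → ℕ}
    (h : ∀ i j, (Q i j).natDegree ≤ e j) : Q.det.natDegree ≤ ∑ j, e j := by
  rw [det_apply']
  refine natDegree_sum_le_of_forall_le _ _ fun σ _ => natDegree_mul_le.trans ?_
  rw [natDegree_intCast, zero_add]
  exact (natDegree_prod_le _ _).trans (sum_le_sum fun i _ => h (σ i) i)

theorem coeff_det_of_natDegree_le {Q : Matrix ι ι R[X]} {e : ι → ℕ}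
    (h : ∀ i j, (Q i j).natDegree ≤ e j) :
    Q.det.coeff (∑ j, e j) = (Matrix.of fun i j => (Q i j).coeff (e j)).det := by
  rw [det_apply', finsetSum_coeff, det_apply']
  refine sum_congr rfl fun σ _ => ?_
  rw [← C_eq_intCast, coeff_C_mul, coeff_prod_sum_of_natDegree_le _ _ _ fun i _ => h (σ i) i]
  rfl

theorem det_comp_C_pow_mul_X_ne_zero [IsDomain R] {s : ℕ} {p : Fin s → R[X]}
    (hp : ∀ j, p j ≠ 0) {ω : R} (hω : Injective fun j => ω ^ (p j).natDegree) :
    (Matrix.of fun i j : Fin s => (p j).comp (C (ω ^ (i : ℕ)) * X)).det ≠ 0 := by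
  have hcoeff := coeff_det_of_natDegree_le
    (Q := Matrix.of fun i j : Fin s => (p j).comp (C (ω ^ (i : ℕ)) * X))
    fun i j => natDegree_comp_C_mul_X_le (p j) (ω ^ (i : ℕ))
  have hlead : (Matrix.of fun i j : Fin s =>
        ((p j).comp (C (ω ^ (i : ℕ)) * X)).coeff (p j).natDegree).det
      = (∏ j, (p j).leadingCoeff) * (vandermonde fun j => ω ^ (p j).natDegree).det := by
    rw [← det_transpose (vandermonde _), ← det_mul_row]
    congr 1
    ext i j
    rw [of_apply, of_apply, comp_C_mul_X_coeff, coeff_natDegree, transpose_apply,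
      vandermonde_apply, ← pow_mul, ← pow_mul]
    ring
  intro h0
  simp only [of_apply] at hcoeff
  rw [h0, coeff_zero, hlead] at hcoeff
  exact mul_ne_zero (prod_ne_zero_iff.mpr fun j _ => leadingCoeff_ne_zero.mpr (hp j))
    (det_vandermonde_ne_zero_iff.mpr hω) hcoeff.symm

end Det

end Polynomial

theorem Submodule.exists_natDegree_injective_of_le_finrank {F : Type*} [Field F] {n s : ℕ}
    (W : Submodule F F[X]) (hWn : W ≤ degreeLT F n) (hs : s ≤ Module.finrank F W) :
    ∃ p : Fin s → F[X], (∀ j, p j ∈ W ∧ p j ≠ 0) ∧ Injective fun j => (p j).natDegree := by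
  classical
  set D := (range n).filter fun d => ∃ p ∈ W, p ≠ 0 ∧ p.natDegree = d
  -- A nonzero `p ∈ W` has its leading coefficient at a degree in `D`.
  have hinj : Injective (LinearMap.pi fun d : D => lcoeff F d ∘ₗ W.subtype) := by
    rw [← LinearMap.ker_eq_bot, LinearMap.ker_eq_bot']
    rintro ⟨p, hpW⟩ hp
    by_contra hne
    have hp0 : p ≠ 0 := fun h => hne (Subtype.ext h)
    have hdeg : p.natDegree ∈ D := mem_filter.mpr ⟨mem_range.mpr
      ((natDegree_lt_iff_degree_lt hp0).mpr (mem_degreeLT.mp (hWn hpW))), p, hpW, hp0, rfl⟩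
    exact leadingCoeff_ne_zero.mpr hp0 (congr_fun hp ⟨_, hdeg⟩)
  have hcard : s ≤ #D :=
    hs.trans ((LinearMap.finrank_le_finrank_of_injective hinj).trans (by simp))
  choose p hpW hp0 hpdeg using fun d : D => (mem_filter.mp d.2).2
  let e : Fin s ↪ D := (Fin.castLEEmb hcard).trans D.equivFin.symm.toEmbedding
  refine ⟨p ∘ e, fun j => ⟨hpW _, hp0 _⟩, fun j k h => e.injective (Subtype.ext ?_)⟩
  simpa [hpdeg] using h

namespace Matrix

theorem exists_natDegree_ofFn_mul_injective {F ι : Type*} [Field F] [DecidableEq F]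
    [Fintype ι] {n s : ℕ} (M : Matrix (Fin n) ι F) (hs : s ≤ M.rank) :
    ∃ N : Matrix ι (Fin s) F, (∀ j, ofFn n ((M * N)ᵀ j) ≠ 0) ∧
      Injective fun j => (ofFn n ((M * N)ᵀ j)).natDegree := by
  obtain ⟨p, hp, hinj⟩ :=
    (LinearMap.range (ofFn n ∘ₗ M.mulVecLin)).exists_natDegree_injective_of_le_finrank
      (n := n) (s := s) (by rintro _ ⟨v, rfl⟩; exact mem_degreeLT.mpr (ofFn_degree_lt _)) (by
        rwa [LinearMap.range_comp,
          ← (Submodule.equivMapOfInjective _ (injective_ofFn n) _).finrank_eq])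
  choose v hv using fun j => (hp j).1
  refine ⟨(Matrix.of v)ᵀ, fun j => (hv j).symm ▸ (hp j).2, fun j k h => hinj ?_⟩
  simp only [← hv]
  exact h

theorem rank_map_eval_comp_ofFn_mul_le {R S : Type*} [CommRing R] [DecidableEq R] [CommRing S]
    [StrongRankCondition S] (f : R →+* S) {n m s : ℕ} (M : Matrix (Fin n) (Fin m) R)
    (N : Matrix (Fin m) (Fin s) R) (x : Fin s → S) (α : S) :
    ((Matrix.of fun i j => ((ofFn n ((M * N)ᵀ j)).map f).comp (C (x i) * X)).map (eval α)).rank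
      ≤ ((Matrix.of fun i (k : Fin n) => (x i * α) ^ (k : ℕ)) * M.map f).rank := by
  have hQα : (Matrix.of fun i j => ((ofFn n ((M * N)ᵀ j)).map f).comp (C (x i) * X)).map (eval α)
      = (Matrix.of fun i (k : Fin n) => (x i * α) ^ (k : ℕ)) * M.map f * N.map f := by
    rw [Matrix.mul_assoc, ← Matrix.map_mul]
    ext i j
    simp only [map_apply, of_apply, eval_comp, eval_mul, eval_C, eval_X, eval_map, eval₂_ofFn,
      transpose_apply, mul_apply, mul_comm]
  rw [hQα]
  exact rank_mul_le_left _ _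

theorem det_eq_zero_of_rank_lt {R ι : Type*} [CommRing R] [IsDomain R] [Fintype ι]
    [DecidableEq ι] {A : Matrix ι ι R} (h : A.rank < Fintype.card ι) : A.det = 0 := by
  by_contra h0
  exact h.ne (rank_of_det_ne_zero h0)

end Matrix

theorem rank_extractor_general {F K : Type*} [Field F] [Field K] [Algebra F K]
    (n r r' s : ℕ) (hs : 1 ≤ s) (hsr : s ≤ r) (hrn : r ≤ n)
    (M : Matrix (Fin n) (Fin r') F) (hrank : M.rank = s)
    (ω : K) (hω : Set.InjOn (fun k : ℕ => ω ^ k) (Set.Iio n)) :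
    {α : K | (((Matrix.of fun (i : Fin r) (j : Fin n) =>
        (ω ^ (i : ℕ) * α) ^ (j : ℕ)) * M.map (algebraMap F K)).submatrix
          (Fin.castLE hsr) id).rank < s}.Finite ∧
    {α : K | (((Matrix.of fun (i : Fin r) (j : Fin n) =>
        (ω ^ (i : ℕ) * α) ^ (j : ℕ)) * M.map (algebraMap F K)).submatrix
          (Fin.castLE hsr) id).rank < s}.ncard ≤ n * r - r * (r + 1) / 2 ∧
    n * r - r * (r + 1) / 2 < n * r := by
  classical
  obtain ⟨N, hN0, hNdeg⟩ := M.exists_natDegree_ofFn_mul_injective hrank.ge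
  set φ := algebraMap F K
  set p : Fin s → K[X] := fun j => (ofFn n ((M * N)ᵀ j)).map φ
  have hpinj : Injective fun j => (p j).natDegree := by simpa only [p, natDegree_map] using hNdeg
  have hpdeg : ∀ j, (p j).natDegree < n := fun j =>
    (natDegree_map φ).trans_lt (ofFn_natDegree_lt (hs.trans (hsr.trans hrn)) _)
  set Q : Matrix (Fin s) (Fin s) K[X] := Matrix.of fun i j => (p j).comp (C (ω ^ (i : ℕ)) * X)
  have hQ : Q.det ≠ 0 := det_comp_C_pow_mul_X_ne_zero
    (fun j => (Polynomial.map_ne_zero_iff φ.injective).mpr (hN0 j))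
    fun j k h => hpinj (hω (hpdeg j) (hpdeg k) h)
  set bad := {α : K | (((Matrix.of fun (i : Fin r) (j : Fin n) =>
        (ω ^ (i : ℕ) * α) ^ (j : ℕ)) * M.map φ).submatrix (Fin.castLE hsr) id).rank < s}
  have hbad : bad ⊆ Q.det.rootSet K := fun α hα => mem_rootSet.mpr ⟨hQ, by
    rw [coe_aeval_eq_eval, ← coe_evalRingHom, RingHom.map_det, RingHom.mapMatrix_apply,
      coe_evalRingHom]
    refine det_eq_zero_of_rank_lt ?_
    rw [Fintype.card_fin]
    exact (rank_map_eval_comp_ofFn_mul_le φ M N (fun i => ω ^ (i : ℕ)) α).trans_lt hα⟩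
  have hdeg : Q.det.natDegree ≤ n * r - r * (r + 1) / 2 :=
    (natDegree_det_le_of_natDegree_le (e := fun j => (p j).natDegree)
      fun i j => natDegree_comp_C_mul_X_le (p j) (ω ^ (i : ℕ))).trans
      (sum_le_mul_sub_of_injective hsr hrn hpinj hpdeg)
  have hfin := Q.det.rootSet_finite K
  exact ⟨hfin.subset hbad, (Set.ncard_le_ncard hbad hfin).trans ((ncard_rootSet_le _ K).trans hdeg),
    Nat.sub_lt (Nat.mul_pos (by omega) (by omega)) (Nat.div_pos (by nlinarith) two_pos)⟩

/-- Rank extractor (Gabizon–Raz type): for M an n × r' matrix over F of rank s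
(1 ≤ s ≤ r ≤ n, r' ≥ s), K an extension of F, and ω ∈ K whose powers ω^0,…,ω^(n-1) are
distinct (order ≥ n), with A_α the r × n matrix (A_α)_{i,j} = (ω^i α)^j, the set of α ∈ K
for which the first s rows of A_α M have rank < s is finite, of size at most
nr − r(r+1)/2 < nr. -/
theorem rank_extractor {F K : Type*} [Field F] [Field K] [Algebra F K]
    (n r r' s : ℕ) (hs : 1 ≤ s) (hsr : s ≤ r) (hrn : r ≤ n) (hr' : s ≤ r')
    (M : Matrix (Fin n) (Fin r') F) (hrank : M.rank = s)
    (ω : K) (hω : Set.InjOn (fun k : ℕ => ω ^ k) (Set.Iio n)) :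
    {α : K | (((Matrix.of fun (i : Fin r) (j : Fin n) =>
        (ω ^ (i : ℕ) * α) ^ (j : ℕ)) * M.map (algebraMap F K)).submatrix
          (Fin.castLE hsr) id).rank < s}.Finite ∧
    {α : K | (((Matrix.of fun (i : Fin r) (j : Fin n) =>
        (ω ^ (i : ℕ) * α) ^ (j : ℕ)) * M.map (algebraMap F K)).submatrix
          (Fin.castLE hsr) id).rank < s}.ncard ≤ n * r - r * (r + 1) / 2 ∧
    n * r - r * (r + 1) / 2 < n * r :=
  rank_extractor_general n r r' s hs hsr hrn M hrank ω hω
end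

section
/- Over a field of characteristic zero (formally, over Q), for a vector of polynomials P_j(x⃗,c⃗) = Σ_m g_{j,m}(x_m, c⃗) (each g_{j,m} a polynomial in the single variable x_m and the parameters c⃗) and an exponent vector e⃗, one has (1/e⃗!) · ∏_j P_j^{e_j} = coeff_{z⃗^{e⃗}} ( ∏_m ∏_j trexp_{e_j}( g_{j,m}(x_m, c⃗) · z_j ) ), where trexp_e(x) = Σ_{ℓ=0}^{e} x^ℓ/ℓ! is the truncated exponential and the coefficient is taken of the monomial z⃗^{e⃗} = ∏_j z_j^{e_j} viewing the expression as a polynomial in z⃗ with coefficients in Q[x⃗,c⃗]. -/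
/-!
Truncating a power series in degrees `> e` does not change the coefficients of degree `≤ e` of a
product, so the coefficient of `z ^ d`, `d ≤ e`, in `∏ₘ trexp_e (aₘ z)` is that of
`∏ₘ exp (aₘ z) = exp ((∑ₘ aₘ) z)`, namely `(∑ₘ aₘ) ^ d / d!`. In `∏ⱼ ∏ₘ trexp_{eⱼ} (g_{j,m} zⱼ)` the
`j`-th factor is a polynomial in `zⱼ` alone, so the coefficient of `z^e` is the product over `j`
of these one-variable coefficients.
-/

open Finset Polynomial PowerSeries

namespace MvPolynomial

theorem coeff_prod_aeval_X {R σ : Type*} [CommSemiring R] [Fintype σ]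
    (p : σ → R[X]) (d : σ →₀ ℕ) :
    coeff d (∏ i, Polynomial.aeval (X i : MvPolynomial σ R) (p i)) = ∏ i, (p i).coeff (d i) := by
  classical
  have aeval_X_eq_sum (i : σ) : Polynomial.aeval (X i : MvPolynomial σ R) (p i) =
      ∑ ℓ ∈ (p i).support, monomial (Finsupp.single i ℓ) ((p i).coeff ℓ) := by
    conv_lhs => rw [(p i).as_sum_support]
    simp only [map_sum, Polynomial.aeval_monomial, algebraMap_eq, C_mul_X_pow_eq_monomial]
  simp_rw [aeval_X_eq_sum, prod_univ_sum, ← monomial_sum_prod,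
    ← Finsupp.equivFunOnFinite_symm_eq_sum, coeff_sum, coeff_monomial, Equiv.symm_apply_eq]
  rw [sum_ite_eq']
  split_ifs with hd
  · rfl
  · obtain ⟨i, hi⟩ : ∃ i, d i ∉ (p i).support := by simpa [Fintype.mem_piFinset] using hd
    exact (prod_eq_zero (mem_univ i) (Polynomial.notMem_support_iff.mp hi)).symm

end MvPolynomial

theorem PowerSeries.trunc_prod_trunc {R ι : Type*} [CommSemiring R] (n : ℕ) (s : Finset ι)
    (f : ι → R⟦X⟧) : trunc n (∏ i ∈ s, (trunc n (f i) : R⟦X⟧)) = trunc n (∏ i ∈ s, f i) := by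
  classical
  induction s using Finset.induction with
  | empty => rfl
  | insert i s hi ih =>
    rw [prod_insert hi, prod_insert hi, trunc_trunc_mul, ← trunc_mul_trunc, ih, trunc_mul_trunc]

section TruncatedExponential

variable {R : Type*} [CommRing R] [Algebra ℚ R]

noncomputable def truncExp (e : ℕ) (a : R) : R[X] :=
  ∑ ℓ ∈ range (e + 1), Polynomial.C ((ℓ.factorial : ℚ)⁻¹ • a ^ ℓ) * Polynomial.X ^ ℓ

theorem truncExp_eq_trunc_rescale_exp (e : ℕ) (a : R) :
    truncExp e a = trunc (e + 1) (rescale a (exp R)) := by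
  ext ℓ
  simp only [truncExp, Polynomial.finsetSum_coeff, Polynomial.coeff_C_mul_X_pow, coeff_trunc,
    coeff_rescale, coeff_exp, sum_ite_eq, mem_range]
  split_ifs
  · rw [Algebra.smul_def, one_div, mul_comm]
  · rfl

theorem prod_rescale_exp {ι : Type*} (s : Finset ι) (a : ι → R) :
    ∏ i ∈ s, rescale (a i) (exp R) = rescale (∑ i ∈ s, a i) (exp R) := by
  classical
  induction s using Finset.induction with
  | empty => simp
  | insert i s hi ih => rw [prod_insert hi, sum_insert hi, ih, exp_mul_exp_eq_exp_add]

theorem coeff_prod_truncExp {ι : Type*} (s : Finset ι) (a : ι → R) {d e : ℕ} (hde : d ≤ e) :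
    (∏ i ∈ s, truncExp e (a i)).coeff d = (d.factorial : ℚ)⁻¹ • (∑ i ∈ s, a i) ^ d := by
  have coe_prod : ((∏ i ∈ s, truncExp e (a i) : R[X]) : R⟦X⟧) =
      ∏ i ∈ s, (truncExp e (a i) : R⟦X⟧) :=
    map_prod Polynomial.coeToPowerSeries.ringHom _ s
  rw [← Polynomial.coeff_coe, coe_prod, ← coeff_coe_trunc_of_lt (Nat.lt_succ_of_le hde)]
  simp_rw [truncExp_eq_trunc_rescale_exp]
  rw [trunc_prod_trunc, coeff_coe_trunc_of_lt (Nat.lt_succ_of_le hde), prod_rescale_exp,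
    coeff_rescale, coeff_exp, Algebra.smul_def, one_div, mul_comm]

end TruncatedExponential

theorem duality_over_Q_general {n k : ℕ} {γ : Type*}
    (g : Fin k → Fin n → MvPolynomial (Fin n ⊕ γ) ℚ)
    (e : Fin k → ℕ) :
    (∏ j, ((e j).factorial : ℚ))⁻¹ • ∏ j, (∑ m, g j m) ^ (e j) =
      MvPolynomial.coeff (Finsupp.equivFunOnFinite.symm e)
        (∏ m : Fin n, ∏ j : Fin k,
          ∑ ℓ ∈ Finset.range (e j + 1),
            MvPolynomial.C (((ℓ.factorial : ℚ))⁻¹ • (g j m) ^ ℓ) *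
              (MvPolynomial.X j : MvPolynomial (Fin k) (MvPolynomial (Fin n ⊕ γ) ℚ)) ^ ℓ) := by
  have aeval_X_prod_truncExp (j : Fin k) :
      Polynomial.aeval (MvPolynomial.X j) (∏ m, truncExp (e j) (g j m)) =
        ∏ m, ∑ ℓ ∈ range (e j + 1), MvPolynomial.C (((ℓ.factorial : ℚ))⁻¹ • (g j m) ^ ℓ) *
          (MvPolynomial.X j : MvPolynomial (Fin k) (MvPolynomial (Fin n ⊕ γ) ℚ)) ^ ℓ := by
    simp only [truncExp, map_prod, map_sum, map_mul, map_pow, Polynomial.aeval_C,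
      Polynomial.aeval_X, MvPolynomial.algebraMap_eq]
  rw [prod_comm, ← prod_congr rfl fun j _ ↦ aeval_X_prod_truncExp j,
    MvPolynomial.coeff_prod_aeval_X]
  simp only [Finsupp.coe_equivFunOnFinite_symm, coeff_prod_truncExp _ _ le_rfl]
  rw [prod_smul, prod_inv_distrib]

/-- Duality over ℚ: for polynomials P_j(x⃗,c⃗) = Σ_m g_{j,m}(x_m,c⃗), where each g_{j,m}
involves only the variable x_m and the parameters c⃗, and an exponent vector e⃗,
(1/e⃗!) ∏_j P_j^{e_j} is the coefficient of z⃗^{e⃗} in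
∏_m ∏_j trexp_{e_j}(g_{j,m}(x_m,c⃗)·z_j), where trexp_e(x) = Σ_{ℓ=0}^e x^ℓ/ℓ!. -/
theorem duality_over_Q {n k : ℕ} {γ : Type*}
    (g : Fin k → Fin n → MvPolynomial (Fin n ⊕ γ) ℚ)
    (hg : ∀ j m, g j m ∈ MvPolynomial.supported ℚ
      ({Sum.inl m} ∪ Set.range (Sum.inr : γ → Fin n ⊕ γ)))
    (e : Fin k → ℕ) :
    (∏ j, ((e j).factorial : ℚ))⁻¹ • ∏ j, (∑ m, g j m) ^ (e j) =
      MvPolynomial.coeff (Finsupp.equivFunOnFinite.symm e)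
        (∏ m : Fin n, ∏ j : Fin k,
          ∑ ℓ ∈ Finset.range (e j + 1),
            MvPolynomial.C (((ℓ.factorial : ℚ))⁻¹ • (g j m) ^ ℓ) *
              (MvPolynomial.X j : MvPolynomial (Fin k) (MvPolynomial (Fin n ⊕ γ) ℚ)) ^ ℓ) :=
  duality_over_Q_general g e
end

section
/- Staircase matrix evaluation extracts graded parts: let F be a field, n ≥ 1, D ≥ 0. For i ∈ {0,…,n-1} define the (D+1)×(D+1) matrix X_i over the polynomial ring F[x_{i,j} : j ∈ {1,…,D}] by (X_i)_{k,ℓ} = x_{i,ℓ} if ℓ = k+1 and 0 otherwise. Let φ be the unique F-linear map on noncommutative polynomials sending the word x_{i_1} x_{i_2} ⋯ x_{i_d} to x_{i_1,1} x_{i_2,2} ⋯ x_{i_d,d} (and 1 to 1). Then for every noncommutative polynomial f ∈ F⟨x_0,…,x_{n-1}⟩ and every 0 ≤ ℓ ≤ D, the (0,ℓ) entry of f(X_0,…,X_{n-1}) equals φ(H_ℓ(f)), where H_ℓ(f) is the homogeneous degree-ℓ part of f. -/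
/-- The staircase matrix X_i: the (D+1)×(D+1) matrix over F[x_{i,j}] with
(X_i)_{k,k+1} = x_{i,k+1} and zeros elsewhere. Variables are indexed by pairs (i,j). -/
noncomputable def staircaseMatrix (F : Type*) [Field F] (n D : ℕ) (i : Fin n) :
    Matrix (Fin (D + 1)) (Fin (D + 1)) (MvPolynomial (Fin n × ℕ) F) :=
  Matrix.of fun k l => if (l : ℕ) = (k : ℕ) + 1 then MvPolynomial.X (i, (l : ℕ)) else 0

/-- Evaluation of a noncommutative polynomial (an element of the monoid algebra of the
free monoid on n generators) at the staircase matrices, substituting X_i for x_i and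
a ↦ a·I for scalars. -/
noncomputable def staircaseEval (F : Type*) [Field F] (n D : ℕ)
    (f : MonoidAlgebra F (FreeMonoid (Fin n))) :
    Matrix (Fin (D + 1)) (Fin (D + 1)) (MvPolynomial (Fin n × ℕ) F) :=
  MonoidAlgebra.lift F
    (Matrix (Fin (D + 1)) (Fin (D + 1)) (MvPolynomial (Fin n × ℕ) F)) (FreeMonoid (Fin n))
    (FreeMonoid.lift (staircaseMatrix F n D)) f

/-!
Each `X_i` is supported on the superdiagonal, so the product of the `X_i` along a word `w`
is supported on the entries `(k, k + |w|)`, where it equals the product of the variables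
met along the path `k → k + 1 → ⋯ → k + |w|`. From row `0` this is `φ(w)` in column `|w|`,
and linearity of evaluation in `f` leaves exactly the words of length `ℓ`.
-/

section
variable {F : Type*} [Field F] {n D : ℕ}

theorem staircaseMatrix_mul_apply (i : Fin n)
    (M : Matrix (Fin (D + 1)) (Fin (D + 1)) (MvPolynomial (Fin n × ℕ) F)) (k l : Fin (D + 1)) :
    (staircaseMatrix F n D i * M) k l =
      if h : (k : ℕ) + 1 ≤ D then MvPolynomial.X (i, (k : ℕ) + 1) * M ⟨k + 1, by omega⟩ l
      else 0 := by
  rw [Matrix.mul_apply]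
  split_ifs with h
  · rw [Finset.sum_eq_single ⟨k + 1, by omega⟩]
    · simp [staircaseMatrix]
    · intro m _ hm
      have : (m : ℕ) ≠ k + 1 := fun h' => hm (Fin.ext h')
      simp [staircaseMatrix, this]
    · simp
  · refine Finset.sum_eq_zero fun m _ => ?_
    have : (m : ℕ) ≠ k + 1 := by omega
    simp [staircaseMatrix, this]

theorem list_prod_staircaseMatrix_apply (L : List (Fin n)) (k l : Fin (D + 1)) :
    (L.map (staircaseMatrix F n D)).prod k l =
      if (l : ℕ) = k + L.length then
        ∏ t : Fin L.length, MvPolynomial.X (L.get t, (k : ℕ) + t + 1) else 0 := by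
  induction L generalizing k with
  | nil => simp [Matrix.one_apply, Fin.ext_iff, eq_comm]
  | cons a L ih =>
    rw [List.map_cons, List.prod_cons, staircaseMatrix_mul_apply]
    split_ifs with hk hl hl
    · rw [ih, if_pos (by simp only [List.length_cons] at hl ⊢; omega)]
      erw [Fin.prod_univ_succ]
      simp [add_assoc, add_comm 1]
    · rw [ih, if_neg (by simp only [List.length_cons] at hl ⊢; omega), mul_zero]
    · have := l.isLt
      simp only [List.length_cons] at hl
      omega
    · rfl

theorem staircaseEval_apply (f : MonoidAlgebra F (FreeMonoid (Fin n))) (k l : Fin (D + 1)) :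
    staircaseEval F n D f k l =
      f.coeff.sum fun w c => c • (w.toList.map (staircaseMatrix F n D)).prod k l := by
  rw [staircaseEval, MonoidAlgebra.lift_apply, Finsupp.sum, Finsupp.sum, Matrix.sum_apply]
  simp only [Matrix.smul_apply, FreeMonoid.lift_apply]

end

theorem staircase_entry_eq_graded_part_general {F : Type*} [Field F] (n D : ℕ)
    (f : MonoidAlgebra F (FreeMonoid (Fin n))) (ℓ : ℕ) (hℓ : ℓ ≤ D) :
    staircaseEval F n D f 0 ⟨ℓ, Nat.lt_succ_of_le hℓ⟩ =
      f.coeff.sum fun w c =>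
        if w.toList.length = ℓ then
          c • ∏ t : Fin w.toList.length, MvPolynomial.X (w.toList.get t, (t : ℕ) + 1)
        else 0 := by
  rw [staircaseEval_apply]
  refine Finset.sum_congr rfl fun w _ => ?_
  simp only [list_prod_staircaseMatrix_apply, Fin.val_zero, zero_add, eq_comm (a := ℓ), smul_ite,
    smul_zero]

/-- Staircase evaluation extracts graded parts: for any noncommutative polynomial f and
0 ≤ ℓ ≤ D, the (0,ℓ) entry of f(X_0,…,X_{n-1}) is φ(H_ℓ(f)), where H_ℓ(f) is the
homogeneous degree-ℓ part of f and φ sends the word x_{i_1}⋯x_{i_d} to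
x_{i_1,1}⋯x_{i_d,d}. -/
theorem staircase_entry_eq_graded_part {F : Type*} [Field F] (n D : ℕ) (hn : 1 ≤ n)
    (f : MonoidAlgebra F (FreeMonoid (Fin n))) (ℓ : ℕ) (hℓ : ℓ ≤ D) :
    staircaseEval F n D f 0 ⟨ℓ, Nat.lt_succ_of_le hℓ⟩ =
      f.coeff.sum fun w c =>
        if w.toList.length = ℓ then
          c • ∏ t : Fin w.toList.length, MvPolynomial.X (w.toList.get t, (t : ℕ) + 1)
        else 0 :=
  staircase_entry_eq_graded_part_general n D f ℓ hℓ
end
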